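/- For 1 ≤ p < q < ∞, every p-summing weighted holomorphic mapping is q-summing weighted holomorphic with π_q^{Hv}(f) ≤ π_p^{Hv}(f). -/

import Mathlib

open scoped BigOperators
open MeasureTheory

noncomputable section

/-- The closed unit ball of the weighted holomorphic space `Hv(U)`. -/
def HvBall {E : Type*} [NormedAddCommGroup E] [NormedSpace ℂ E]
    (v : E → ℝ) (U : Set E) : Set (E → ℂ) :=
  {g | DifferentiableOn ℂ g U ∧ ∀ x ∈ U, v x * ‖g x‖ ≤ 1}

/-- `sup_{g ∈ B_{Hv(U)}} (∑ |λᵢ|^p v(xᵢ)^p |g(xᵢ)|^p)^(1/p)`. -/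
def hvSup {E : Type*} [NormedAddCommGroup E] [NormedSpace ℂ E]
    (p : ℝ) (v : E → ℝ) (U : Set E) {n : ℕ} (lam : Fin n → ℂ) (x : Fin n → E) : ℝ :=
  ⨆ g : HvBall v U, (∑ i, ‖lam i‖ ^ p * v (x i) ^ p * ‖(g : E → ℂ) (x i)‖ ^ p) ^ (1 / p)

/-- `f` satisfies the `p`-summing weighted holomorphic inequality with constant `C`. -/
def PSummingWith {E F : Type*} [NormedAddCommGroup E] [NormedSpace ℂ E]
    [NormedAddCommGroup F] [NormedSpace ℂ F]
    (p : ℝ) (v : E → ℝ) (U : Set E) (f : E → F) (C : ℝ) : Prop :=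
  ∀ (n : ℕ) (lam : Fin n → ℂ) (x : Fin n → E), (∀ i, x i ∈ U) →
    (∑ i, ‖lam i‖ ^ p * v (x i) ^ p * ‖f (x i)‖ ^ p) ^ (1 / p) ≤ C * hvSup p v U lam x

/-- The `p`-summing weighted holomorphic norm `π_p^{Hv}(f)`. -/
def pihv {E F : Type*} [NormedAddCommGroup E] [NormedSpace ℂ E]
    [NormedAddCommGroup F] [NormedSpace ℂ F]
    (p : ℝ) (v : E → ℝ) (U : Set E) (f : E → F) : ℝ :=
  sInf {C | 0 ≤ C ∧ PSummingWith p v U f C}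


open Finset

lemma mul_mul_rpow_of_nonneg {a b c : ℝ} (ha : 0 ≤ a) (hb : 0 ≤ b) (hc : 0 ≤ c) (r : ℝ) :
    (a * b * c) ^ r = a ^ r * b ^ r * c ^ r := by
  rw [Real.mul_rpow (mul_nonneg ha hb) hc, Real.mul_rpow ha hb]

/-- Hölder's inequality for the conjugate exponents `q / p` and `q / (q - p)`. -/
lemma sum_rpow_mul_rpow_le {ι : Type*} (s : Finset ι) {t a : ι → ℝ} (ht : ∀ i ∈ s, 0 ≤ t i)
    (ha : ∀ i ∈ s, 0 ≤ a i) {p q : ℝ} (hp : 0 < p) (hpq : p < q) :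
    (∑ i ∈ s, t i ^ p * a i ^ (q - p)) ^ (1 / p) ≤
      (∑ i ∈ s, t i ^ q) ^ (1 / q) * (∑ i ∈ s, a i ^ q) ^ (1 / p - 1 / q) := by
  have hq : 0 < q := hp.trans hpq
  have hqp : 0 < q - p := sub_pos.mpr hpq
  have hconj : (q / p).HolderConjugate (q / (q - p)) := by
    rw [Real.holderConjugate_iff_eq_conjExponent ((one_lt_div hp).mpr hpq)]
    field_simp
  have holder := Real.inner_le_Lp_mul_Lq_of_nonneg s hconj
    (fun i hi => Real.rpow_nonneg (ht i hi) p) (fun i hi => Real.rpow_nonneg (ha i hi) (q - p))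
  have pow_t : ∀ i ∈ s, (t i ^ p) ^ (q / p) = t i ^ q := fun i hi => by
    rw [← Real.rpow_mul (ht i hi), mul_div_cancel₀ q hp.ne']
  have pow_a : ∀ i ∈ s, (a i ^ (q - p)) ^ (q / (q - p)) = a i ^ q := fun i hi => by
    rw [← Real.rpow_mul (ha i hi), mul_div_cancel₀ q hqp.ne']
  rw [sum_congr rfl pow_t, sum_congr rfl pow_a, one_div_div, one_div_div] at holder
  have hT : 0 ≤ ∑ i ∈ s, t i ^ q := sum_nonneg fun i hi => Real.rpow_nonneg (ht i hi) q
  have hA : 0 ≤ ∑ i ∈ s, a i ^ q := sum_nonneg fun i hi => Real.rpow_nonneg (ha i hi) q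
  calc (∑ i ∈ s, t i ^ p * a i ^ (q - p)) ^ (1 / p)
      ≤ ((∑ i ∈ s, t i ^ q) ^ (p / q) * (∑ i ∈ s, a i ^ q) ^ ((q - p) / q)) ^ (1 / p) := by
        gcongr
        exact sum_nonneg fun i hi =>
          mul_nonneg (Real.rpow_nonneg (ht i hi) p) (Real.rpow_nonneg (ha i hi) (q - p))
    _ = (∑ i ∈ s, t i ^ q) ^ (1 / q) * (∑ i ∈ s, a i ^ q) ^ (1 / p - 1 / q) := by
        rw [Real.mul_rpow (Real.rpow_nonneg hT _) (Real.rpow_nonneg hA _),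
          ← Real.rpow_mul hT, ← Real.rpow_mul hA]
        congr 2 <;> field_simp

lemma rpow_one_div_le_of_rpow_le_mul {S K p q : ℝ} (hS : 0 ≤ S) (hK : 0 ≤ K) (hp : 0 < p)
    (hpq : p < q) (h : S ^ (1 / p) ≤ K * S ^ (1 / p - 1 / q)) : S ^ (1 / q) ≤ K := by
  rcases hS.eq_or_lt with rfl | hS
  · rwa [Real.zero_rpow (one_div_pos.mpr (hp.trans hpq)).ne']
  · rw [← add_sub_cancel (1 / q) (1 / p), Real.rpow_add hS, add_sub_cancel] at h
    exact le_of_mul_le_mul_right h (Real.rpow_pos_of_pos hS _)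

section WeightedSums

variable {E : Type*} {v : E → ℝ} {n : ℕ} {x : Fin n → E}

lemma sum_weighted_rpow_eq {G : Type*} [NormedAddCommGroup G] (hvx : ∀ i, 0 ≤ v (x i))
    (lam : Fin n → ℂ) (h : E → G) (r : ℝ) :
    ∑ i, ‖lam i‖ ^ r * v (x i) ^ r * ‖h (x i)‖ ^ r = ∑ i, (‖lam i‖ * v (x i) * ‖h (x i)‖) ^ r :=
  sum_congr rfl fun i _ => (mul_mul_rpow_of_nonneg (norm_nonneg _) (hvx i) (norm_nonneg _) r).symm

lemma sum_rescaled_weighted_rpow_eq {G : Type*} [NormedAddCommGroup G] (hvx : ∀ i, 0 ≤ v (x i))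
    (lam : Fin n → ℂ) {a : Fin n → ℝ} (ha : ∀ i, 0 ≤ a i) (h : E → G) {p : ℝ} (hp : 0 < p)
    (q : ℝ) :
    ∑ i, ‖lam i * ((a i ^ (q / p - 1) : ℝ) : ℂ)‖ ^ p * v (x i) ^ p * ‖h (x i)‖ ^ p =
      ∑ i, (‖lam i‖ * v (x i) * ‖h (x i)‖) ^ p * a i ^ (q - p) := by
  refine sum_congr rfl fun i _ => ?_
  have hexp : (q / p - 1) * p = q - p := by field_simp
  rw [norm_mul, Complex.norm_real, Real.norm_of_nonneg (Real.rpow_nonneg (ha i) _),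
    Real.mul_rpow (norm_nonneg _) (Real.rpow_nonneg (ha i) _), ← Real.rpow_mul (ha i), hexp,
    mul_mul_rpow_of_nonneg (norm_nonneg _) (hvx i) (norm_nonneg _)]
  ring

variable [NormedAddCommGroup E] [NormedSpace ℂ E] {U : Set E}

lemma zero_mem_hvBall : (0 : E → ℂ) ∈ HvBall v U :=
  ⟨differentiableOn_const 0, fun x _ => by simp⟩

lemma bddAbove_hvSup_range {p : ℝ} (hp : 0 < p) (hx : ∀ i, x i ∈ U) (hvx : ∀ i, 0 ≤ v (x i))
    (lam : Fin n → ℂ) :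
    BddAbove (Set.range fun g : HvBall v U =>
      (∑ i, ‖lam i‖ ^ p * v (x i) ^ p * ‖(g : E → ℂ) (x i)‖ ^ p) ^ (1 / p)) := by
  refine ⟨(∑ i, ‖lam i‖ ^ p) ^ (1 / p), ?_⟩
  rintro _ ⟨⟨g, hg⟩, rfl⟩
  dsimp only
  rw [sum_weighted_rpow_eq hvx]
  refine Real.rpow_le_rpow (sum_nonneg fun i _ => ?_) (sum_le_sum fun i _ => ?_) (by positivity)
  · have := hvx i; positivity
  · have := hvx i
    gcongr
    rw [mul_assoc]
    exact mul_le_of_le_one_right (norm_nonneg _) (hg.2 _ (hx i))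

lemma le_hvSup {p : ℝ} (hp : 0 < p) (hx : ∀ i, x i ∈ U) (hvx : ∀ i, 0 ≤ v (x i))
    (lam : Fin n → ℂ) {g : E → ℂ} (hg : g ∈ HvBall v U) :
    (∑ i, ‖lam i‖ ^ p * v (x i) ^ p * ‖g (x i)‖ ^ p) ^ (1 / p) ≤ hvSup p v U lam x :=
  le_ciSup (bddAbove_hvSup_range hp hx hvx lam) (⟨g, hg⟩ : HvBall v U)

lemma hvSup_nonneg {p : ℝ} (hp : 0 < p) (hx : ∀ i, x i ∈ U) (hvx : ∀ i, 0 ≤ v (x i))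
    (lam : Fin n → ℂ) : 0 ≤ hvSup p v U lam x :=
  (Real.rpow_nonneg (sum_nonneg fun i _ => by have := hvx i; positivity) _).trans
    (le_hvSup hp hx hvx lam zero_mem_hvBall)

lemma hvSup_rescaled_le {p q : ℝ} (hp : 0 < p) (hpq : p < q) (hx : ∀ i, x i ∈ U)
    (hvx : ∀ i, 0 ≤ v (x i)) (lam : Fin n → ℂ) {a : Fin n → ℝ} (ha : ∀ i, 0 ≤ a i) :
    hvSup p v U (fun i => lam i * ((a i ^ (q / p - 1) : ℝ) : ℂ)) x ≤
      hvSup q v U lam x * (∑ i, a i ^ q) ^ (1 / p - 1 / q) := by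
  have : Nonempty (HvBall v U) := ⟨⟨0, zero_mem_hvBall⟩⟩
  refine ciSup_le fun ⟨g, hg⟩ => ?_
  have hterm : ∀ i, 0 ≤ ‖lam i‖ * v (x i) * ‖g (x i)‖ := fun i => by
    have := hvx i; positivity
  rw [sum_rescaled_weighted_rpow_eq hvx lam ha g hp q]
  calc _ ≤ (∑ i, (‖lam i‖ * v (x i) * ‖g (x i)‖) ^ q) ^ (1 / q) *
          (∑ i, a i ^ q) ^ (1 / p - 1 / q) :=
        sum_rpow_mul_rpow_le univ (fun i _ => hterm i) (fun i _ => ha i) hp hpq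
    _ ≤ hvSup q v U lam x * (∑ i, a i ^ q) ^ (1 / p - 1 / q) := by
        refine mul_le_mul_of_nonneg_right ?_
          (Real.rpow_nonneg (sum_nonneg fun i _ => Real.rpow_nonneg (ha i) q) _)
        rw [← sum_weighted_rpow_eq hvx]
        exact le_hvSup (hp.trans hpq) hx hvx lam hg

end WeightedSums

/-- Testing the `p`-inequality on the coefficients `λᵢ aᵢ^(q/p - 1)`, where
`aᵢ = |λᵢ| v(xᵢ) ‖f(xᵢ)‖`, turns its left side into `(∑ aᵢ^q)^(1/p)`, while by Hölder its right
side grows by at most the factor `(∑ aᵢ^q)^(1/p - 1/q)`. -/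
theorem PSummingWith.of_lt {E F : Type*} [NormedAddCommGroup E] [NormedSpace ℂ E]
    [NormedAddCommGroup F] [NormedSpace ℂ F] {U : Set E} {v : E → ℝ} (hv : ∀ y ∈ U, 0 ≤ v y)
    {p q : ℝ} (hp : 0 < p) (hpq : p < q) {f : E → F} {C : ℝ} (hC0 : 0 ≤ C)
    (hC : PSummingWith p v U f C) : PSummingWith q v U f C := by
  intro n lam x hx
  have hvx : ∀ i, 0 ≤ v (x i) := fun i => hv _ (hx i)
  set a : Fin n → ℝ := fun i => ‖lam i‖ * v (x i) * ‖f (x i)‖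
  have ha : ∀ i, 0 ≤ a i := fun i => by have := hvx i; positivity
  have hS : 0 ≤ ∑ i, a i ^ q := sum_nonneg fun i _ => Real.rpow_nonneg (ha i) q
  rw [sum_weighted_rpow_eq hvx]
  refine rpow_one_div_le_of_rpow_le_mul hS
    (mul_nonneg hC0 (hvSup_nonneg (hp.trans hpq) hx hvx lam)) hp hpq ?_
  have hrescaled : ∑ i, a i ^ q =
      ∑ i, ‖lam i * ((a i ^ (q / p - 1) : ℝ) : ℂ)‖ ^ p * v (x i) ^ p * ‖f (x i)‖ ^ p := by
    rw [sum_rescaled_weighted_rpow_eq hvx lam ha f hp q]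
    refine sum_congr rfl fun i _ => ?_
    rw [← Real.rpow_add' (ha i) (by linarith), add_sub_cancel]
  calc (∑ i, a i ^ q) ^ (1 / p)
      ≤ C * hvSup p v U (fun i => lam i * ((a i ^ (q / p - 1) : ℝ) : ℂ)) x := by
        rw [hrescaled]; exact hC n _ x hx
    _ ≤ C * (hvSup q v U lam x * (∑ i, a i ^ q) ^ (1 / p - 1 / q)) :=
        mul_le_mul_of_nonneg_left (hvSup_rescaled_le hp hpq hx hvx lam ha) hC0
    _ = C * hvSup q v U lam x * (∑ i, a i ^ q) ^ (1 / p - 1 / q) := (mul_assoc _ _ _).symm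

theorem stmt10_general {E F : Type*} [NormedAddCommGroup E] [NormedSpace ℂ E]
    [NormedAddCommGroup F] [NormedSpace ℂ F]
    (U : Set E) (v : E → ℝ) (hv : ∀ x ∈ U, 0 < v x)
    (p q : ℝ) (hp : 1 ≤ p) (hpq : p < q)
    (f : E → F)
    (hfp : ∃ C, 0 ≤ C ∧ PSummingWith p v U f C) :
    (∃ C, 0 ≤ C ∧ PSummingWith q v U f C) ∧ pihv q v U f ≤ pihv p v U f := by
  have mono : ∀ C, 0 ≤ C ∧ PSummingWith p v U f C → 0 ≤ C ∧ PSummingWith q v U f C :=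
    fun C ⟨hC0, hC⟩ =>
      ⟨hC0, hC.of_lt (fun y hy => (hv y hy).le) (zero_lt_one.trans_le hp) hpq hC0⟩
  obtain ⟨C, hC⟩ := hfp
  exact ⟨⟨C, mono C hC⟩, csInf_le_csInf ⟨0, fun _ hc => hc.1⟩ ⟨C, hC⟩ mono⟩

/-- Inclusion: for `1 ≤ p < q < ∞`, every `p`-summing weighted holomorphic map is
`q`-summing weighted holomorphic, with `π_q^{Hv}(f) ≤ π_p^{Hv}(f)`. -/
theorem stmt10 {E F : Type*} [NormedAddCommGroup E] [NormedSpace ℂ E] [CompleteSpace E]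
    [NormedAddCommGroup F] [NormedSpace ℂ F] [CompleteSpace F]
    (U : Set E) (hU : IsOpen U) (v : E → ℝ) (hv : ∀ x ∈ U, 0 < v x)
    (hvc : ContinuousOn v U) (p q : ℝ) (hp : 1 ≤ p) (hpq : p < q)
    (f : E → F) (hf : DifferentiableOn ℂ f U)
    (hfp : ∃ C, 0 ≤ C ∧ PSummingWith p v U f C) :
    (∃ C, 0 ≤ C ∧ PSummingWith q v U f C) ∧ pihv q v U f ≤ pihv p v U f :=
  stmt10_general U v hv p q hp hpq f hfp
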